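/- arXiv:0906.2821 — 2 statements merged into one kernel-verified Lean document; each statement's English description precedes it below -/
import Mathlib

section
/- The homological-equation fixed point map T(P)(x) = I - ∫ₓ^∞ e^{A₊(x-y)} (A(y) - A₊) P(y) e^{-A₊(x-y)} dy is a contraction on L^∞([M,∞); Mat(n,ℂ)) for M sufficiently large, provided ‖A(x) - A₊‖ ≤ C e^{-θ x} with θ larger than twice the spectral spread of A₊. -/
/-!
Conjugation by `e^{t A₊}` costs at most `K e^{μ |x - y|}` while `A(y) - A₊` decays like
`C e^{-θ y}`, so for `y ≥ x` the integrand of `T P (x)` is dominated by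
`K C ‖P‖ e^{-μ x} e^{(μ - θ) y}`, whose integral over `[x, ∞)` is `K C ‖P‖ e^{-θ x} / (θ - μ)`.
Since `T P - I` is linear in `P`, this bounds both `T P - I` and `T P - T Q` by
`c = K C e^{-θ M} / (θ - μ)` times the sup norm on `[M, ∞)`, and `c ≤ 1/2` for `M` large.
The fixed point then comes from Banach's theorem on the closed unit ball about `I` in the bounded
continuous functions on `[M, ∞)`. Continuity of `T P` follows by conjugating with `e^{(x - M) A₊}`,
which turns `T P (x) - I` into `e^{(x - M) A₊} G(x) e^{(M - x) A₊}`, where `G(x)` is the integral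
over `[x, ∞)` of a function that no longer depends on `x`.
-/

open MeasureTheory NormedSpace Set Filter Topology

section FixedPoint

variable {α E : Type*} [TopologicalSpace α] [NormedAddCommGroup E] {s : Set α} {a : E} {r c : ℝ}
  {T : (α → E) → α → E}

lemma continuousOn_extend_val (f : C(s, E)) (g : α → E) :
    ContinuousOn (Function.extend Subtype.val f g) s := by
  rw [continuousOn_iff_continuous_domRestrict]
  convert f.continuous using 1
  ext x
  exact Subtype.val_injective.extend_apply f g x

lemma eqOn_of_fixed_of_contraction (hc0 : 0 ≤ c) (hc1 : c < 1)
    (hcontr : ∀ P Q, ContinuousOn P s → ContinuousOn Q s →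
      (∀ y ∈ s, ‖P y - a‖ ≤ r) → (∀ y ∈ s, ‖Q y - a‖ ≤ r) →
      ∀ D, (∀ y ∈ s, ‖P y - Q y‖ ≤ D) → ∀ x ∈ s, ‖T P x - T Q x‖ ≤ c * D)
    {P Q : α → E} (hP : ContinuousOn P s) (hQ : ContinuousOn Q s)
    (hPr : ∀ y ∈ s, ‖P y - a‖ ≤ r) (hQr : ∀ y ∈ s, ‖Q y - a‖ ≤ r)
    (hPfix : ∀ x ∈ s, T P x = P x) (hQfix : ∀ x ∈ s, T Q x = Q x) : EqOn Q P s := by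
  have hiter (k : ℕ) : ∀ y ∈ s, ‖Q y - P y‖ ≤ 2 * r * c ^ k := by
    induction k with
    | zero =>
      intro y hy
      linarith [norm_sub_le_norm_sub_add_norm_sub (Q y) a (P y), norm_sub_rev a (P y), hQr y hy,
        hPr y hy]
    | succ k ih =>
      intro y hy
      rw [← hQfix y hy, ← hPfix y hy, pow_succ, mul_comm _ c, ← mul_assoc]
      exact (hcontr Q P hQ hP hQr hPr _ ih y hy).trans_eq (by ring)
  intro x hx
  have := ge_of_tendsto' ((tendsto_pow_atTop_nhds_zero_of_lt_one hc0 hc1).const_mul (2 * r))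
    fun k => hiter k x hx
  rwa [mul_zero, norm_le_zero_iff, sub_eq_zero] at this

lemma exists_fixed_of_contraction [CompleteSpace E] (hr : 0 ≤ r) (hc0 : 0 ≤ c) (hc1 : c < 1)
    (hcont : ∀ P, ContinuousOn P s → (∀ y ∈ s, ‖P y - a‖ ≤ r) → ContinuousOn (T P) s)
    (hball : ∀ P, ContinuousOn P s → (∀ y ∈ s, ‖P y - a‖ ≤ r) → ∀ x ∈ s, ‖T P x - a‖ ≤ r)
    (hcontr : ∀ P Q, ContinuousOn P s → ContinuousOn Q s →
      (∀ y ∈ s, ‖P y - a‖ ≤ r) → (∀ y ∈ s, ‖Q y - a‖ ≤ r) →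
      ∀ D, (∀ y ∈ s, ‖P y - Q y‖ ≤ D) → ∀ x ∈ s, ‖T P x - T Q x‖ ≤ c * D) :
    ∃ P, ContinuousOn P s ∧ (∀ y ∈ s, ‖P y - a‖ ≤ r) ∧ ∀ x ∈ s, T P x = P x := by
  let B := Metric.closedBall (BoundedContinuousFunction.const s a) r
  let extend (f : B) : α → E := Function.extend Subtype.val f.1 fun _ => a
  have extend_apply (f : B) (x : s) : extend f x = f.1 x := Subtype.val_injective.extend_apply _ _ x
  have extend_cont (f : B) : ContinuousOn (extend f) s :=
    continuousOn_extend_val f.1.toContinuousMap _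
  have extend_dist (f g : B) : ∀ y ∈ s, ‖extend f y - extend g y‖ ≤ dist f g := fun y hy => by
    rw [extend_apply f ⟨y, hy⟩, extend_apply g ⟨y, hy⟩, ← dist_eq_norm]
    exact BoundedContinuousFunction.dist_coe_le_dist _
  have extend_ball (f : B) : ∀ y ∈ s, ‖extend f y - a‖ ≤ r := fun y hy => by
    rw [extend_apply f ⟨y, hy⟩, ← dist_eq_norm]
    exact (BoundedContinuousFunction.dist_coe_le_dist _).trans f.2
  let Φ (f : B) : B :=
    ⟨.ofNormedAddCommGroup (s.domRestrict (T (extend f)))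
      (continuousOn_iff_continuous_domRestrict.1 (hcont _ (extend_cont f) (extend_ball f)))
      (‖a‖ + r)
      fun y => (norm_le_norm_add_norm_sub' (T (extend f) y) a).trans
        (by linarith [hball _ (extend_cont f) (extend_ball f) y y.2]),
    (BoundedContinuousFunction.dist_le hr).2 fun y =>
      (dist_eq_norm _ _).trans_le (hball _ (extend_cont f) (extend_ball f) y y.2)⟩
  have hΦ : ContractingWith ⟨c, hc0⟩ Φ := by
    refine ⟨hc1, LipschitzWith.of_dist_le_mul fun f g => ?_⟩
    refine (BoundedContinuousFunction.dist_le (by positivity)).2 fun x => ?_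
    rw [dist_eq_norm]
    exact hcontr _ _ (extend_cont f) (extend_cont g) (extend_ball f) (extend_ball g) _
      (extend_dist f g) x x.2
  have : Nonempty B := ⟨⟨_, Metric.mem_closedBall_self hr⟩⟩
  have : CompleteSpace B := Metric.isClosed_closedBall.completeSpace_coe
  obtain ⟨f, hf⟩ : ∃ f, Function.IsFixedPt Φ f := ⟨_, hΦ.fixedPoint_isFixedPt⟩
  refine ⟨extend f, extend_cont f, extend_ball f, fun x hx => ?_⟩
  rw [extend_apply f ⟨x, hx⟩]
  exact congr_arg (fun g : B => g.1 ⟨x, hx⟩) hf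

end FixedPoint

lemma integrableOn_exp_mul_Ici {a : ℝ} (ha : a < 0) (c : ℝ) :
    IntegrableOn (fun x => Real.exp (a * x)) (Ici c) := by
  rw [integrableOn_Ici_iff_integrableOn_Ioi]
  exact integrableOn_exp_mul_Ioi ha c

lemma exists_nonneg_mul_exp_neg_mul_le (L : ℝ) {θ ε : ℝ} (hθ : 0 < θ) (hε : 0 < ε) :
    ∃ M, 0 ≤ M ∧ L * Real.exp (-θ * M) ≤ ε := by
  have hlim : Tendsto (fun M => L * Real.exp (-θ * M)) atTop (𝓝 0) := by
    simpa using (Real.tendsto_exp_atBot.comp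
      (tendsto_id.const_mul_atTop_of_neg (neg_lt_zero.2 hθ))).const_mul L
  obtain ⟨M, hM, hM0⟩ := ((hlim.eventually (Iic_mem_nhds hε)).and (eventually_ge_atTop 0)).exists
  exact ⟨M, hM0, hM⟩

section HomologicalEquation

variable {𝔸 : Type*} [NormedRing 𝔸] [NormedAlgebra ℝ 𝔸]

noncomputable def homEqIntegrand (A : ℝ → 𝔸) (a : 𝔸) (P : ℝ → 𝔸) (x y : ℝ) : 𝔸 :=
  exp ((x - y) • a) * ((A y - a) * (P y * exp ((y - x) • a)))

noncomputable def homEqOperator (A : ℝ → 𝔸) (a : 𝔸) (P : ℝ → 𝔸) (x : ℝ) : 𝔸 :=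
  1 - ∫ y in Ici x, homEqIntegrand A a P x y

variable {A P Q : ℝ → 𝔸} {a : 𝔸} {K μ C θ B M x y : ℝ}

lemma homEqIntegrand_sub (x y : ℝ) :
    homEqIntegrand A a P x y - homEqIntegrand A a Q x y = homEqIntegrand A a (P - Q) x y := by
  simp only [homEqIntegrand, Pi.sub_apply, ← mul_sub, ← sub_mul]

lemma norm_homEqIntegrand_le (x y : ℝ) :
    ‖homEqIntegrand A a P x y‖ ≤
      ‖exp ((x - y) • a)‖ * ‖exp (-((x - y) • a))‖ * (‖A y - a‖ * ‖P y‖) := by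
  rw [homEqIntegrand, ← neg_smul, neg_sub]
  calc _ ≤ ‖exp ((x - y) • a)‖ * (‖A y - a‖ * (‖P y‖ * ‖exp ((y - x) • a)‖)) := by
        refine (norm_mul_le _ _).trans (mul_le_mul_of_nonneg_left ?_ (norm_nonneg _))
        exact (norm_mul_le _ _).trans (mul_le_mul_of_nonneg_left (norm_mul_le _ _) (norm_nonneg _))
    _ = _ := by ring

lemma norm_homEqIntegrand_le_exp
    (hexp : ∀ t : ℝ, ‖exp (t • a)‖ * ‖exp (-(t • a))‖ ≤ K * Real.exp (μ * |t|))
    (hconv : ‖A y - a‖ ≤ C * Real.exp (-θ * y)) (hPB : ‖P y‖ ≤ B) (hxy : x ≤ y) :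
    ‖homEqIntegrand A a P x y‖ ≤ K * C * B * Real.exp (-μ * x) * Real.exp ((μ - θ) * y) := by
  have hB : 0 ≤ B := (norm_nonneg _).trans hPB
  have hCe : 0 ≤ C * Real.exp (-θ * y) := (norm_nonneg _).trans hconv
  refine (norm_homEqIntegrand_le x y).trans ((mul_le_mul (hexp (x - y))
    (mul_le_mul hconv hPB (norm_nonneg _) hCe) (by positivity)
    ((mul_nonneg (norm_nonneg _) (norm_nonneg _)).trans (hexp _))).trans_eq ?_)
  rw [abs_sub_comm, abs_of_nonneg (sub_nonneg.2 hxy)]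
  have : Real.exp (μ * (y - x)) * Real.exp (-θ * y) =
      Real.exp (-μ * x) * Real.exp ((μ - θ) * y) := by
    rw [← Real.exp_add, ← Real.exp_add]; ring_nf
  linear_combination K * C * B * this

lemma homEq_const_nonneg (hθμ : μ < θ)
    (hexp : ∀ t : ℝ, ‖exp (t • a)‖ * ‖exp (-(t • a))‖ ≤ K * Real.exp (μ * |t|))
    (hconv : ‖A y - a‖ ≤ C * Real.exp (-θ * y)) : 0 ≤ K * C / (θ - μ) := by
  have hK : 0 ≤ K := nonneg_of_mul_nonneg_left
    ((mul_nonneg (norm_nonneg _) (norm_nonneg _)).trans (hexp 0)) (Real.exp_pos _)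
  have hC : 0 ≤ C := nonneg_of_mul_nonneg_left ((norm_nonneg _).trans hconv) (Real.exp_pos _)
  exact div_nonneg (mul_nonneg hK hC) (sub_pos.2 hθμ).le

lemma norm_integral_homEqIntegrand_le (hθμ : μ < θ)
    (hexp : ∀ t : ℝ, ‖exp (t • a)‖ * ‖exp (-(t • a))‖ ≤ K * Real.exp (μ * |t|))
    (hconv : ∀ y ∈ Ici x, ‖A y - a‖ ≤ C * Real.exp (-θ * y))
    (hPB : ∀ y ∈ Ici x, ‖P y‖ ≤ B) :
    ‖∫ y in Ici x, homEqIntegrand A a P x y‖ ≤ K * C / (θ - μ) * Real.exp (-θ * x) * B := by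
  have hmaj : IntegrableOn (fun y => K * C * B * Real.exp (-μ * x) * Real.exp ((μ - θ) * y))
      (Ici x) :=
    (integrableOn_exp_mul_Ici (by linarith) x).const_mul _
  refine (norm_integral_le_of_norm_le hmaj ?_).trans_eq ?_
  · exact (ae_restrict_iff' measurableSet_Ici).2 (ae_of_all _ fun y hy =>
      norm_homEqIntegrand_le_exp hexp (hconv y hy) (hPB y hy) hy)
  rw [integral_Ici_eq_integral_Ioi, integral_const_mul, integral_exp_mul_Ioi (by linarith)]
  have : Real.exp (-μ * x) * Real.exp ((μ - θ) * x) = Real.exp (-θ * x) := by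
    rw [← Real.exp_add]; ring_nf
  rw [← this]
  field_simp [sub_ne_zero.2 hθμ.ne, sub_ne_zero.2 hθμ.ne']
  ring

lemma norm_integral_homEqIntegrand_le_of_mem_Ici (hθ : 0 ≤ θ) (hθμ : μ < θ)
    (hexp : ∀ t : ℝ, ‖exp (t • a)‖ * ‖exp (-(t • a))‖ ≤ K * Real.exp (μ * |t|))
    (hconv : ∀ y ∈ Ici M, ‖A y - a‖ ≤ C * Real.exp (-θ * y))
    (hPB : ∀ y ∈ Ici M, ‖P y‖ ≤ B) (hx : x ∈ Ici M) :
    ‖∫ y in Ici x, homEqIntegrand A a P x y‖ ≤ K * C / (θ - μ) * Real.exp (-θ * M) * B := by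
  have hsub : Ici x ⊆ Ici M := Ici_subset_Ici.2 hx
  have hKC := homEq_const_nonneg hθμ hexp (hconv x hx)
  have hB : 0 ≤ B := (norm_nonneg _).trans (hPB x hx)
  refine (norm_integral_homEqIntegrand_le hθμ hexp (fun y hy => hconv y (hsub hy))
    (fun y hy => hPB y (hsub hy))).trans ?_
  have hexpx : Real.exp (-θ * x) ≤ Real.exp (-θ * M) :=
    Real.exp_le_exp.2 (mul_le_mul_of_nonpos_left hx (neg_nonpos.2 hθ))
  gcongr

lemma norm_homEqOperator_sub_one_le (hθ : 0 ≤ θ) (hθμ : μ < θ)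
    (hexp : ∀ t : ℝ, ‖exp (t • a)‖ * ‖exp (-(t • a))‖ ≤ K * Real.exp (μ * |t|))
    (hconv : ∀ y ∈ Ici M, ‖A y - a‖ ≤ C * Real.exp (-θ * y))
    (hPB : ∀ y ∈ Ici M, ‖P y‖ ≤ B) (hx : x ∈ Ici M) :
    ‖homEqOperator A a P x - 1‖ ≤ K * C / (θ - μ) * Real.exp (-θ * M) * B := by
  rw [homEqOperator, sub_sub_cancel_left, norm_neg]
  exact norm_integral_homEqIntegrand_le_of_mem_Ici hθ hθμ hexp hconv hPB hx

variable [CompleteSpace 𝔸]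

lemma exp_add_smul (a : 𝔸) (s t : ℝ) : exp ((s + t) • a) = exp (s • a) * exp (t • a) := by
  let : NormedAlgebra ℚ 𝔸 := .restrictScalars ℚ ℝ 𝔸
  rw [add_smul]
  exact exp_add_of_commute (((Commute.refl a).smul_left s).smul_right t)

lemma continuous_exp_smul (a : 𝔸) : Continuous fun t : ℝ => exp (t • a) := by
  let : NormedAlgebra ℚ 𝔸 := .restrictScalars ℚ ℝ 𝔸
  exact exp_continuous.comp (continuous_id.smul continuous_const)

lemma homEqIntegrand_eq_conj (x z y : ℝ) :
    homEqIntegrand A a P x y =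
      exp ((x - z) • a) * homEqIntegrand A a P z y * exp ((z - x) • a) := by
  simp only [homEqIntegrand]
  rw [show x - y = (x - z) + (z - y) by ring, show y - x = (y - z) + (z - x) by ring,
    exp_add_smul, exp_add_smul]
  noncomm_ring

lemma continuousOn_homEqIntegrand {s : Set ℝ} (hA : ContinuousOn A s) (hP : ContinuousOn P s)
    (x : ℝ) : ContinuousOn (homEqIntegrand A a P x) s :=
  ((continuous_exp_smul a).comp (continuous_const.sub continuous_id)).continuousOn.mul
    ((hA.sub continuousOn_const).mul
      (hP.mul ((continuous_exp_smul a).comp (continuous_id.sub continuous_const)).continuousOn))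

lemma integrableOn_homEqIntegrand (hθμ : μ < θ)
    (hA : ContinuousOn A (Ici M)) (hP : ContinuousOn P (Ici M))
    (hexp : ∀ t : ℝ, ‖exp (t • a)‖ * ‖exp (-(t • a))‖ ≤ K * Real.exp (μ * |t|))
    (hconv : ∀ y ∈ Ici M, ‖A y - a‖ ≤ C * Real.exp (-θ * y))
    (hPB : ∀ y ∈ Ici M, ‖P y‖ ≤ B) {z : ℝ} (hz : z ∈ Ici M) (hxz : x ≤ z) :
    IntegrableOn (homEqIntegrand A a P x) (Ici z) := by
  have hsub : Ici z ⊆ Ici M := Ici_subset_Ici.2 hz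
  have hmaj : IntegrableOn (fun y => K * C * B * Real.exp (-μ * x) * Real.exp ((μ - θ) * y))
      (Ici z) :=
    (integrableOn_exp_mul_Ici (by linarith) z).const_mul _
  refine hmaj.mono' (((continuousOn_homEqIntegrand hA hP x).mono hsub).aestronglyMeasurable
    measurableSet_Ici) ((ae_restrict_iff' measurableSet_Ici).2 (ae_of_all _ fun y hy => ?_))
  exact norm_homEqIntegrand_le_exp hexp (hconv y (hsub hy)) (hPB y (hsub hy)) (hxz.trans hy)

lemma norm_homEqOperator_sub_le {D : ℝ} (hθ : 0 ≤ θ) (hθμ : μ < θ) (hA : ContinuousOn A (Ici M))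
    (hP : ContinuousOn P (Ici M)) (hQ : ContinuousOn Q (Ici M))
    (hexp : ∀ t : ℝ, ‖exp (t • a)‖ * ‖exp (-(t • a))‖ ≤ K * Real.exp (μ * |t|))
    (hconv : ∀ y ∈ Ici M, ‖A y - a‖ ≤ C * Real.exp (-θ * y))
    (hPB : ∀ y ∈ Ici M, ‖P y‖ ≤ B) (hQB : ∀ y ∈ Ici M, ‖Q y‖ ≤ B)
    (hPQ : ∀ y ∈ Ici M, ‖P y - Q y‖ ≤ D) (hx : x ∈ Ici M) :
    ‖homEqOperator A a P x - homEqOperator A a Q x‖ ≤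
      K * C / (θ - μ) * Real.exp (-θ * M) * D := by
  rw [homEqOperator, homEqOperator, sub_sub_sub_cancel_left, norm_sub_rev,
    ← integral_sub (integrableOn_homEqIntegrand hθμ hA hP hexp hconv hPB hx le_rfl)
      (integrableOn_homEqIntegrand hθμ hA hQ hexp hconv hQB hx le_rfl)]
  simp only [homEqIntegrand_sub]
  exact norm_integral_homEqIntegrand_le_of_mem_Ici hθ hθμ hexp hconv hPQ hx

lemma continuousOn_homEqOperator (hθμ : μ < θ)
    (hA : ContinuousOn A (Ici M)) (hP : ContinuousOn P (Ici M))
    (hexp : ∀ t : ℝ, ‖exp (t • a)‖ * ‖exp (-(t • a))‖ ≤ K * Real.exp (μ * |t|))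
    (hconv : ∀ y ∈ Ici M, ‖A y - a‖ ≤ C * Real.exp (-θ * y))
    (hPB : ∀ y ∈ Ici M, ‖P y‖ ≤ B) :
    ContinuousOn (homEqOperator A a P) (Ici M) := by
  have hint := integrableOn_homEqIntegrand hθμ hA hP hexp hconv hPB self_mem_Ici le_rfl
  have htail : ContinuousOn (fun x => ∫ y in Ioi x, homEqIntegrand A a P M y) (Ici M) :=
    (hint.mono_set Ioi_subset_Ici_self).continuousOn_Ici_primitive_Ioi
  have hconj : ∀ x ∈ Ici M, homEqOperator A a P x =
      1 - exp ((x - M) • a) * (∫ y in Ioi x, homEqIntegrand A a P M y) * exp ((M - x) • a) := by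
    intro x hx
    have hintx : IntegrableOn (homEqIntegrand A a P M) (Ici x) :=
      hint.mono_set (Ici_subset_Ici.2 hx)
    simp only [homEqOperator, homEqIntegrand_eq_conj (P := P) x M,
      ← integral_Ici_eq_integral_Ioi]
    rw [integral_mul_const_of_integrable (hintx.const_mul _),
      integral_const_mul_of_integrable hintx]
  refine ContinuousOn.congr (continuousOn_const.sub ?_) hconj
  exact (((continuous_exp_smul a).comp (continuous_id.sub continuous_const)).continuousOn.mul
    htail).mul ((continuous_exp_smul a).comp (continuous_const.sub continuous_id)).continuousOn

end HomologicalEquation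

theorem stmt4_general (n : ℕ)
    (A : ℝ → (EuclideanSpace ℂ (Fin n) →L[ℂ] EuclideanSpace ℂ (Fin n)))
    (Aplus : EuclideanSpace ℂ (Fin n) →L[ℂ] EuclideanSpace ℂ (Fin n))
    (hA : ContinuousOn A (Set.Ici 0))
    (K μ C θ : ℝ) (hμ : 0 ≤ μ) (hθμ : μ < θ)
    (hexp : ∀ t : ℝ, ‖exp (t • Aplus)‖ * ‖exp (-(t • Aplus))‖ ≤
      K * Real.exp (μ * |t|))
    (hconv : ∀ x : ℝ, 0 ≤ x → ‖A x - Aplus‖ ≤ C * Real.exp (-θ * x)) :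
    ∃ M : ℝ, 0 ≤ M ∧
      ∀ T : (ℝ → (EuclideanSpace ℂ (Fin n) →L[ℂ] EuclideanSpace ℂ (Fin n))) →
            ℝ → (EuclideanSpace ℂ (Fin n) →L[ℂ] EuclideanSpace ℂ (Fin n)),
        (∀ P x, T P x = 1 - ∫ y in Set.Ici x,
            exp ((x - y) • Aplus) * ((A y - Aplus) *
              (P y * exp ((y - x) • Aplus)))) →
        -- `T` maps the closed unit ball about the constant function `I` into itself
        (∀ P, ContinuousOn P (Set.Ici M) → (∀ y, M ≤ y → ‖P y - 1‖ ≤ 1) →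
            ∀ x, M ≤ x → ‖T P x - 1‖ ≤ 1) ∧
        -- `T` is a contraction with respect to the sup norm on `[M,∞)`
        (∃ c : ℝ, 0 ≤ c ∧ c < 1 ∧
          ∀ P Q, ContinuousOn P (Set.Ici M) → ContinuousOn Q (Set.Ici M) →
            (∀ y, M ≤ y → ‖P y - 1‖ ≤ 1) → (∀ y, M ≤ y → ‖Q y - 1‖ ≤ 1) →
            ∀ K' : ℝ, (∀ y, M ≤ y → ‖P y - Q y‖ ≤ K') →
              ∀ x, M ≤ x → ‖T P x - T Q x‖ ≤ c * K') ∧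
        -- hence `T` has a unique fixed point in the ball
        (∃ P, ContinuousOn P (Set.Ici M) ∧ (∀ y, M ≤ y → ‖P y - 1‖ ≤ 1) ∧
          (∀ x, M ≤ x → T P x = P x) ∧
          ∀ Q, ContinuousOn Q (Set.Ici M) → (∀ y, M ≤ y → ‖Q y - 1‖ ≤ 1) →
            (∀ x, M ≤ x → T Q x = Q x) → ∀ x, M ≤ x → Q x = P x) := by
  have hθ : 0 < θ := hμ.trans_lt hθμ
  obtain ⟨M, hM0, hMc⟩ := exists_nonneg_mul_exp_neg_mul_le (K * C / (θ - μ)) hθ one_half_pos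
  set c := K * C / (θ - μ) * Real.exp (-θ * M)
  have hc0 : 0 ≤ c :=
    mul_nonneg (homEq_const_nonneg hθμ hexp (hconv 0 le_rfl)) (Real.exp_pos _).le
  refine ⟨M, hM0, fun T hT => ?_⟩
  obtain rfl : T = homEqOperator A Aplus := funext fun P => funext (hT P)
  have hA' : ContinuousOn A (Ici M) := hA.mono (Ici_subset_Ici.2 hM0)
  have hconv' : ∀ y ∈ Ici M, ‖A y - Aplus‖ ≤ C * Real.exp (-θ * y) :=
    fun y hy => hconv y (hM0.trans hy)
  have hbound : ∀ P : ℝ → (EuclideanSpace ℂ (Fin n) →L[ℂ] EuclideanSpace ℂ (Fin n)),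
      (∀ y ∈ Ici M, ‖P y - 1‖ ≤ 1) → ∀ y ∈ Ici M, ‖P y‖ ≤ 2 := fun P hP y hy => by
    have : ‖(1 : EuclideanSpace ℂ (Fin n) →L[ℂ] EuclideanSpace ℂ (Fin n))‖ ≤ 1 :=
      ContinuousLinearMap.norm_id_le
    linarith [norm_le_norm_add_norm_sub' (P y) 1, hP y hy]
  have hball : ∀ P, ContinuousOn P (Ici M) → (∀ y ∈ Ici M, ‖P y - 1‖ ≤ 1) →
      ∀ x ∈ Ici M, ‖homEqOperator A Aplus P x - 1‖ ≤ 1 := fun P _ hP x hx =>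
    (norm_homEqOperator_sub_one_le hθ.le hθμ hexp hconv' (hbound P hP) hx).trans (by linarith)
  have hcontr : ∀ P Q, ContinuousOn P (Ici M) → ContinuousOn Q (Ici M) →
      (∀ y ∈ Ici M, ‖P y - 1‖ ≤ 1) → (∀ y ∈ Ici M, ‖Q y - 1‖ ≤ 1) →
      ∀ D, (∀ y ∈ Ici M, ‖P y - Q y‖ ≤ D) →
        ∀ x ∈ Ici M, ‖homEqOperator A Aplus P x - homEqOperator A Aplus Q x‖ ≤ c * D :=
    fun P Q hPc hQc hP hQ D hD x hx => norm_homEqOperator_sub_le hθ.le hθμ hA' hPc hQc hexp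
      hconv' (hbound P hP) (hbound Q hQ) hD hx
  obtain ⟨P, hPc, hPr, hPfix⟩ := exists_fixed_of_contraction zero_le_one hc0 (by linarith)
    (fun P hPc hP => continuousOn_homEqOperator hθμ hA' hPc hexp hconv' (hbound P hP))
    hball hcontr
  exact ⟨hball, ⟨c, hc0, by linarith, hcontr⟩, P, hPc, hPr, hPfix, fun Q hQc hQr hQfix =>
    eqOn_of_fixed_of_contraction hc0 (by linarith) hcontr hPc hQc hPr hQr hPfix hQfix⟩

/-- The homological-equation fixed point map
`T(P)(x) = I - ∫ₓ^∞ e^{A₊(x-y)} (A(y) - A₊) P(y) e^{-A₊(x-y)} dy`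
is a contraction on the unit ball about the constant function `I` in
`L^∞([M,∞))` for `M` sufficiently large, provided `‖A(x) - A₊‖ ≤ C e^{-θ x}`
with `θ > μ`, where `‖e^{A₊ t}‖ ‖e^{-A₊ t}‖ ≤ K e^{μ |t|}`; hence it has a
unique fixed point there. -/
theorem stmt4 (n : ℕ)
    (A : ℝ → (EuclideanSpace ℂ (Fin n) →L[ℂ] EuclideanSpace ℂ (Fin n)))
    (Aplus : EuclideanSpace ℂ (Fin n) →L[ℂ] EuclideanSpace ℂ (Fin n))
    (hA : ContinuousOn A (Set.Ici 0))
    (K μ C θ : ℝ) (hK : 0 < K) (hμ : 0 ≤ μ) (hC : 0 < C) (hθμ : μ < θ)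
    (hexp : ∀ t : ℝ, ‖exp (t • Aplus)‖ * ‖exp (-(t • Aplus))‖ ≤
      K * Real.exp (μ * |t|))
    (hconv : ∀ x : ℝ, 0 ≤ x → ‖A x - Aplus‖ ≤ C * Real.exp (-θ * x)) :
    ∃ M : ℝ, 0 ≤ M ∧
      ∀ T : (ℝ → (EuclideanSpace ℂ (Fin n) →L[ℂ] EuclideanSpace ℂ (Fin n))) →
            ℝ → (EuclideanSpace ℂ (Fin n) →L[ℂ] EuclideanSpace ℂ (Fin n)),
        (∀ P x, T P x = 1 - ∫ y in Set.Ici x,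
            exp ((x - y) • Aplus) * ((A y - Aplus) *
              (P y * exp ((y - x) • Aplus)))) →
        -- `T` maps the closed unit ball about the constant function `I` into itself
        (∀ P, ContinuousOn P (Set.Ici M) → (∀ y, M ≤ y → ‖P y - 1‖ ≤ 1) →
            ∀ x, M ≤ x → ‖T P x - 1‖ ≤ 1) ∧
        -- `T` is a contraction with respect to the sup norm on `[M,∞)`
        (∃ c : ℝ, 0 ≤ c ∧ c < 1 ∧
          ∀ P Q, ContinuousOn P (Set.Ici M) → ContinuousOn Q (Set.Ici M) →
            (∀ y, M ≤ y → ‖P y - 1‖ ≤ 1) → (∀ y, M ≤ y → ‖Q y - 1‖ ≤ 1) →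
            ∀ K' : ℝ, (∀ y, M ≤ y → ‖P y - Q y‖ ≤ K') →
              ∀ x, M ≤ x → ‖T P x - T Q x‖ ≤ c * K') ∧
        -- hence `T` has a unique fixed point in the ball
        (∃ P, ContinuousOn P (Set.Ici M) ∧ (∀ y, M ≤ y → ‖P y - 1‖ ≤ 1) ∧
          (∀ x, M ≤ x → T P x = P x) ∧
          ∀ Q, ContinuousOn Q (Set.Ici M) → (∀ y, M ≤ y → ‖Q y - 1‖ ≤ 1) →
            (∀ x, M ≤ x → T Q x = Q x) → ∀ x, M ≤ x → Q x = P x) :=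
  stmt4_general n A Aplus hA K μ C θ hμ hθμ hexp hconv
end

section
/- Weakened spectral gap with L¹ perturbation: if the spectral gap condition min σ(Re M₁) - max σ(Re M₂) ≥ η + α(x) holds with |α|_{L¹} ≤ C₁, then the forward flow of 𝓜(x)Φ := M₂(x)Φ - ΦM₁(x) satisfies ‖solution operator from y to x‖ ≤ C e^{C₁} e^{-η(x-y)} for x > y. -/
/-!
To first order, `Φ (t + h) = (1 + h M₂) Φ (1 - h M₁)`, and `‖1 + h T‖ ≤ 1 + h β + O(h²)` as soon as
`re ⟪T x, x⟫ ≤ β ‖x‖²`. Hence the right Dini derivative of `‖Φ‖` is at most `g ‖Φ‖`, where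
`g = max σ(Re M₂) - min σ(Re M₁)` is continuous and, by the gap condition, `g ≤ -η + |α|`.
A comparison argument gives `‖Φ x‖ ≤ exp (∫ g) ‖Φ y‖ ≤ exp (C₁ - η (x - y)) ‖Φ y‖`, so `C = 1`.
-/

open ContinuousLinearMap Filter Set RCLike
open scoped Topology InnerProductSpace

variable {E F : Type*} [NormedAddCommGroup E] [InnerProductSpace ℂ E]
  [NormedAddCommGroup F] [InnerProductSpace ℂ F]

namespace ContinuousLinearMap

/-- The paper's `max σ(Re T)`, the top of the spectrum of the Hermitian part of `T`;
it is `0` on the zero space. -/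
noncomputable def rayleighSup (T : E →L[ℂ] E) : ℝ :=
  ⨆ x : {x : E // x ≠ 0}, T.rayleighQuotient x

theorem re_inner_le_rayleighSup_mul (T : E →L[ℂ] E) (x : E) :
    re ⟪T x, x⟫_ℂ ≤ T.rayleighSup * ‖x‖ ^ 2 := by
  rcases eq_or_ne x 0 with rfl | hx
  · simp
  have hbdd : BddAbove (range fun x : {x : E // x ≠ 0} => T.rayleighQuotient x) :=
    ⟨‖T‖, by rintro _ ⟨y, rfl⟩; exact (le_abs_self _).trans (T.rayleighQuotient_le_norm y)⟩
  have h := le_ciSup hbdd ⟨x, hx⟩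
  rwa [rayleighQuotient, reApplyInnerSelf_apply, div_le_iff₀ (by positivity)] at h

theorem rayleighSup_le [Nontrivial E] {T : E →L[ℂ] E} {c : ℝ}
    (h : ∀ x, re ⟪T x, x⟫_ℂ ≤ c * ‖x‖ ^ 2) : T.rayleighSup ≤ c := by
  have : Nonempty {x : E // x ≠ 0} := nonempty_subtype.2 (exists_ne 0)
  refine ciSup_le fun ⟨x, hx⟩ => ?_
  rw [rayleighQuotient, reApplyInnerSelf_apply, div_le_iff₀ (by positivity)]
  exact h x

theorem rayleighSup_le_add_norm_sub [Nontrivial E] (T S : E →L[ℂ] E) :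
    T.rayleighSup ≤ S.rayleighSup + ‖T - S‖ := by
  refine rayleighSup_le fun x => ?_
  have hS := S.re_inner_le_rayleighSup_mul x
  have hTS : re ⟪(T - S) x, x⟫_ℂ ≤ ‖T - S‖ * ‖x‖ ^ 2 :=
    calc re ⟪(T - S) x, x⟫_ℂ ≤ ‖(T - S) x‖ * ‖x‖ := re_inner_le_norm _ _
      _ ≤ ‖T - S‖ * ‖x‖ * ‖x‖ := by gcongr; exact le_opNorm _ _
      _ = ‖T - S‖ * ‖x‖ ^ 2 := by ring
  have hsplit : re ⟪T x, x⟫_ℂ = re ⟪S x, x⟫_ℂ + re ⟪(T - S) x, x⟫_ℂ := by simp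
  linarith

theorem lipschitzWith_rayleighSup [Nontrivial E] :
    LipschitzWith 1 (rayleighSup : (E →L[ℂ] E) → ℝ) :=
  LipschitzWith.of_le_add fun T S => by
    simpa [dist_eq_norm] using rayleighSup_le_add_norm_sub T S

end ContinuousLinearMap

theorem Continuous.rayleighSup [Nontrivial E] {M : ℝ → E →L[ℂ] E} (hM : Continuous M) :
    Continuous fun t => (M t).rayleighSup :=
  lipschitzWith_rayleighSup.continuous.comp hM

theorem rayleighSup_neg_add_rayleighSup_le [Nontrivial E] [Nontrivial F] {A : E →L[ℂ] E}
    {B : F →L[ℂ] F} {a b : ℝ} (hA : ∀ x, a * ‖x‖ ^ 2 ≤ re ⟪A x, x⟫_ℂ)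
    (hB : ∀ y, re ⟪B y, y⟫_ℂ ≤ b * ‖y‖ ^ 2) :
    (-A).rayleighSup + B.rayleighSup ≤ b - a := by
  have hA' : (-A).rayleighSup ≤ -a :=
    rayleighSup_le fun x => by simpa [inner_neg_left] using neg_le_neg (hA x)
  linarith [rayleighSup_le hB]

theorem norm_one_add_smul_le {T : E →L[ℂ] E} {β h : ℝ} (hT : ∀ x, re ⟪T x, x⟫_ℂ ≤ β * ‖x‖ ^ 2)
    (hh : 0 ≤ h) (hβ : 0 ≤ 1 + h * β) :
    ‖1 + h • T‖ ≤ 1 + h * β + h ^ 2 * ‖T‖ ^ 2 / 2 := by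
  refine opNorm_le_bound _ (by positivity) fun x => ?_
  have hre : re ⟪x, h • T x⟫_ℂ = h * re ⟪T x, x⟫_ℂ := by
    rw [RCLike.real_smul_eq_coe_smul (K := ℂ), inner_smul_real_right, inner_re_symm,
      RCLike.smul_re]
  have hTx : ‖T x‖ ^ 2 ≤ ‖T‖ ^ 2 * ‖x‖ ^ 2 := by
    rw [← mul_pow]; gcongr; exact le_opNorm _ _
  have hsq : ‖x + h • T x‖ ^ 2 ≤ ((1 + h * β + h ^ 2 * ‖T‖ ^ 2 / 2) * ‖x‖) ^ 2 := by
    rw [norm_add_sq (𝕜 := ℂ), hre, norm_smul, Real.norm_of_nonneg hh]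
    nlinarith [mul_le_mul_of_nonneg_left (hT x) hh, mul_le_mul_of_nonneg_left hTx (sq_nonneg h),
      mul_nonneg (sq_nonneg (h * β + h ^ 2 * ‖T‖ ^ 2 / 2)) (sq_nonneg ‖x‖)]
  simpa using (pow_le_pow_iff_left₀ (norm_nonneg _) (by positivity) two_ne_zero).1 hsq

theorem add_smul_comp_sub_comp_eq (A : E →L[ℂ] E) (B : F →L[ℂ] F) (P : E →L[ℂ] F) (h : ℝ) :
    P + h • (B ∘L P - P ∘L A) =
      ((1 + h • B) ∘L P) ∘L (1 + h • -A) + h ^ 2 • ((B ∘L P) ∘L A) := by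
  ext x
  simp only [add_apply, smul_apply, comp_apply, sub_apply, one_apply_eq_self, neg_apply, map_add,
    map_neg, map_smul_of_tower, smul_neg, pow_two, mul_smul]
  module

theorem norm_add_smul_comp_sub_comp_le {A : E →L[ℂ] E} {B : F →L[ℂ] F} {β₁ β₂ h : ℝ}
    (hA : ∀ x, re ⟪(-A) x, x⟫_ℂ ≤ β₁ * ‖x‖ ^ 2) (hB : ∀ y, re ⟪B y, y⟫_ℂ ≤ β₂ * ‖y‖ ^ 2)
    (hh : 0 ≤ h) (h₁ : 0 ≤ 1 + h * β₁) (h₂ : 0 ≤ 1 + h * β₂) (P : E →L[ℂ] F) :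
    ‖P + h • (B ∘L P - P ∘L A)‖ ≤ (1 + h * β₂ + h ^ 2 * ‖B‖ ^ 2 / 2) *
      (1 + h * β₁ + h ^ 2 * ‖A‖ ^ 2 / 2) * ‖P‖ + h ^ 2 * (‖B‖ * ‖P‖ * ‖A‖) := by
  have hA' := norm_one_add_smul_le hA hh h₁
  rw [norm_neg] at hA'
  rw [add_smul_comp_sub_comp_eq]
  refine (norm_add_le _ _).trans (add_le_add ?_ ?_)
  · calc _ ≤ ‖1 + h • B‖ * ‖P‖ * ‖1 + h • -A‖ :=
          (opNorm_comp_le _ _).trans (by gcongr; exact opNorm_comp_le _ _)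
      _ ≤ _ := by
          rw [mul_right_comm]
          gcongr
          exact norm_one_add_smul_le hB hh h₂
  · rw [norm_smul, Real.norm_of_nonneg (sq_nonneg h)]
    gcongr
    exact (opNorm_comp_le _ _).trans (by gcongr; exact opNorm_comp_le _ _)

theorem eventually_norm_add_smul_comp_sub_comp_le {A : E →L[ℂ] E} {B : F →L[ℂ] F} {β₁ β₂ : ℝ}
    (hA : ∀ x, re ⟪(-A) x, x⟫_ℂ ≤ β₁ * ‖x‖ ^ 2) (hB : ∀ y, re ⟪B y, y⟫_ℂ ≤ β₂ * ‖y‖ ^ 2)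
    (P : E →L[ℂ] F) {r : ℝ} (hr : (β₁ + β₂) * ‖P‖ < r) :
    ∀ᶠ h in 𝓝[>] (0 : ℝ), ‖P + h • (B ∘L P - P ∘L A)‖ ≤ ‖P‖ + h * r := by
  set S : ℝ → ℝ := fun h => (1 + h * β₂ + h ^ 2 * ‖B‖ ^ 2 / 2) *
    (1 + h * β₁ + h ^ 2 * ‖A‖ ^ 2 / 2) * ‖P‖ + h ^ 2 * (‖B‖ * ‖P‖ * ‖A‖)
  have hquad (β c : ℝ) : HasDerivAt (fun h : ℝ => 1 + h * β + h ^ 2 * c / 2) β 0 :=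
    ((((hasDerivAt_id (0 : ℝ)).mul_const β).const_add 1).add
      (((hasDerivAt_pow 2 (0 : ℝ)).mul_const c).div_const 2)).congr_deriv (by simp)
  have hS : HasDerivAt S ((β₁ + β₂) * ‖P‖) 0 := by
    refine ((((hquad β₂ (‖B‖ ^ 2)).mul (hquad β₁ (‖A‖ ^ 2))).mul_const ‖P‖).add
      ((hasDerivAt_pow 2 (0 : ℝ)).mul_const (‖B‖ * ‖P‖ * ‖A‖))).congr_deriv ?_
    simp only [zero_mul, zero_pow two_ne_zero, add_zero]
    ring
  have hslope : ∀ᶠ h in 𝓝[>] (0 : ℝ), slope S 0 h < r :=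
    (hasDerivWithinAt_iff_tendsto_slope' (lt_irrefl 0)).1 hS.hasDerivWithinAt
      |>.eventually (gt_mem_nhds hr)
  have hpos (β : ℝ) : ∀ᶠ h in 𝓝[>] (0 : ℝ), 0 ≤ 1 + h * β :=
    nhdsWithin_le_nhds <| ((continuousAt_const (y := (0 : ℝ))).eventually_lt
      (by fun_prop : ContinuousAt (fun h : ℝ => 1 + h * β) 0) (by simp)).mono fun _ h => h.le
  filter_upwards [hslope, hpos β₁, hpos β₂, self_mem_nhdsWithin] with h hslope h₁ h₂ (hh : 0 < h)
  have hS0 : S 0 = ‖P‖ := by simp [S]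
  calc ‖P + h • (B ∘L P - P ∘L A)‖ ≤ S h := norm_add_smul_comp_sub_comp_le hA hB hh.le h₁ h₂ P
    _ = ‖P‖ + h * slope S 0 h := by
        rw [slope_def_field, hS0, sub_zero, mul_div_cancel₀ _ hh.ne']
        ring
    _ ≤ ‖P‖ + h * r := by gcongr

theorem eventually_slope_norm_lt {G : Type*} [NormedAddCommGroup G] [NormedSpace ℝ G]
    {f : ℝ → G} {f' : G} {t ρ r : ℝ} (hf : HasDerivAt f f' t)
    (hdir : ∀ r > ρ, ∀ᶠ h in 𝓝[>] (0 : ℝ), ‖f t + h • f'‖ ≤ ‖f t‖ + h * r) (hr : ρ < r) :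
    ∀ᶠ z in 𝓝[>] t, slope (fun s => ‖f s‖) t z < r := by
  obtain ⟨r', hρr', hr'r⟩ := exists_between hr
  have hε : 0 < (r - r') / 2 := by linarith
  have hshift : Tendsto (· - t) (𝓝[>] t) (𝓝[>] 0) :=
    tendsto_nhdsWithin_of_tendsto_nhds_of_eventually_within _
      (((continuous_sub_right t).tendsto' t 0 (sub_self t)).mono_left nhdsWithin_le_nhds)
      (eventually_nhdsWithin_of_forall fun _ hz => sub_pos.2 (mem_Ioi.1 hz))
  filter_upwards [hshift.eventually (hdir r' hρr'), self_mem_nhdsWithin,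
    nhdsWithin_le_nhds ((hasDerivAt_iff_isLittleO.1 hf).bound hε)] with z hdirz (hz : t < z) hrem
  rw [Real.norm_of_nonneg (sub_pos.2 hz).le] at hrem
  have htri : ‖f z‖ ≤ ‖f t + (z - t) • f'‖ + ‖f z - f t - (z - t) • f'‖ := by
    simpa [sub_sub, add_sub_cancel] using norm_le_insert' (f z) (f t + (z - t) • f')
  rw [slope_def_field, div_lt_iff₀ (sub_pos.2 hz)]
  nlinarith

theorem le_mul_exp_integral_of_slope_lt {u g : ℝ → ℝ} {a b : ℝ} (hab : a ≤ b)
    (hu : ContinuousOn u (Icc a b)) (hg : Continuous g)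
    (hslope : ∀ t ∈ Ico a b, ∀ r, g t * u t < r → ∃ᶠ z in 𝓝[>] t, slope u t z < r) :
    u b ≤ u a * Real.exp (∫ s in a..b, g s) := by
  set G : ℝ → ℝ := fun t => ∫ s in a..t, g s
  have hG (t : ℝ) : HasDerivAt G (g t) t := (hg.integral_hasStrictDerivAt a t).hasDerivAt
  -- `B' > g B`, so `u` cannot cross the barrier `B`
  have hbarrier : ∀ ε > 0, u b ≤ Real.exp (G b) * (u a + ε * Real.exp (ε * (b - a))) := by
    intro ε hε
    set B : ℝ → ℝ := fun t => Real.exp (G t) * (u a + ε * Real.exp (ε * (t - a)))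
    have hB (t : ℝ) : HasDerivAt B
        (g t * B t + Real.exp (G t) * (ε * (ε * Real.exp (ε * (t - a))))) t := by
      refine ((hG t).exp.mul (((((hasDerivAt_id t).sub_const a).const_mul ε).exp.const_mul ε)
        |>.const_add (u a))).congr_deriv ?_
      simp only [B, id, mul_one]
      ring
    refine image_le_of_liminf_slope_right_lt_deriv_boundary hu hslope (B := B) ?_ hB ?_
      (right_mem_Icc.2 hab)
    · simp [B, G, hε.le]
    · intro t _ hut
      rw [hut, lt_add_iff_pos_right]
      positivity
  have hlim : Tendsto (fun ε => Real.exp (G b) * (u a + ε * Real.exp (ε * (b - a))))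
      (𝓝[>] 0) (𝓝 (Real.exp (G b) * u a)) := by
    have : Continuous fun ε => Real.exp (G b) * (u a + ε * Real.exp (ε * (b - a))) := by
      fun_prop
    simpa using (this.tendsto 0).mono_left nhdsWithin_le_nhds
  exact (ge_of_tendsto hlim (eventually_nhdsWithin_of_forall hbarrier)).trans_eq (mul_comm _ _)

theorem norm_le_mul_exp_integral_rayleighSup [Nontrivial E] [Nontrivial F]
    {M₁ : ℝ → E →L[ℂ] E} {M₂ : ℝ → F →L[ℂ] F} (hM₁ : Continuous M₁) (hM₂ : Continuous M₂)
    {Φ : ℝ → E →L[ℂ] F} (hΦ : ∀ t, HasDerivAt Φ (M₂ t ∘L Φ t - Φ t ∘L M₁ t) t) {y x : ℝ}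
    (hyx : y ≤ x) :
    ‖Φ x‖ ≤ ‖Φ y‖ * Real.exp (∫ t in y..x, ((-M₁ t).rayleighSup + (M₂ t).rayleighSup)) := by
  have hΦc : Continuous Φ := continuous_iff_continuousAt.2 fun t => (hΦ t).continuousAt
  refine le_mul_exp_integral_of_slope_lt hyx hΦc.norm.continuousOn
    (hM₁.fun_neg.rayleighSup.fun_add hM₂.rayleighSup) fun t _ r hr => ?_
  refine (eventually_slope_norm_lt (hΦ t) (fun r hr => ?_) hr).frequently
  exact eventually_norm_add_smul_comp_sub_comp_le ((-M₁ t).re_inner_le_rayleighSup_mul)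
    ((M₂ t).re_inner_le_rayleighSup_mul) (Φ t) hr

theorem intervalIntegral_le_integral_abs_sub_mul {g α : ℝ → ℝ} {η y x : ℝ} (hg : Continuous g)
    (hα : MeasureTheory.Integrable α) (hgα : ∀ t, g t ≤ -η + |α t|) (hyx : y ≤ x) :
    ∫ t in y..x, g t ≤ (∫ t, |α t|) - η * (x - y) := by
  have hαyx : IntervalIntegrable (fun t => |α t|) MeasureTheory.volume y x :=
    hα.abs.intervalIntegrable
  calc ∫ t in y..x, g t ≤ ∫ t in y..x, (-η + |α t|) :=
        intervalIntegral.integral_mono_on hyx (hg.intervalIntegrable _ _)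
          (intervalIntegrable_const.add hαyx) fun t _ => hgα t
    _ = (∫ t in y..x, |α t|) - η * (x - y) := by
        rw [intervalIntegral.integral_add intervalIntegrable_const hαyx,
          intervalIntegral.integral_const, smul_eq_mul]
        ring
    _ ≤ (∫ t, |α t|) - η * (x - y) := by
        gcongr
        rw [intervalIntegral.integral_of_le hyx]
        exact MeasureTheory.setIntegral_le_integral hα.abs (.of_forall fun t => abs_nonneg _)

theorem stmt9_general (k m : ℕ) (η C₁ : ℝ)
    (M₁ : ℝ → (EuclideanSpace ℂ (Fin k) →L[ℂ] EuclideanSpace ℂ (Fin k)))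
    (M₂ : ℝ → (EuclideanSpace ℂ (Fin m) →L[ℂ] EuclideanSpace ℂ (Fin m)))
    (hM₁ : Continuous M₁) (hM₂ : Continuous M₂)
    (a b α : ℝ → ℝ)
    (hα : MeasureTheory.Integrable α)
    (hαL1 : (∫ x, |α x|) ≤ C₁)
    (ha : ∀ x v, a x * ‖v‖ ^ 2 ≤ (inner ℂ (M₁ x v) v : ℂ).re)
    (hb : ∀ x w, (inner ℂ (M₂ x w) w : ℂ).re ≤ b x * ‖w‖ ^ 2)
    (hgap : ∀ x, η + α x ≤ a x - b x) :
    ∃ C : ℝ, 0 < C ∧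
      ∀ Φ : ℝ → (EuclideanSpace ℂ (Fin k) →L[ℂ] EuclideanSpace ℂ (Fin m)),
        (∀ x, HasDerivAt Φ (M₂ x ∘L Φ x - Φ x ∘L M₁ x) x) →
        ∀ y x : ℝ, y < x →
          ‖Φ x‖ ≤ C * Real.exp C₁ * Real.exp (-η * (x - y)) * ‖Φ y‖ := by
  refine ⟨1, one_pos, fun Φ hΦ y x hyx => ?_⟩
  rcases eq_or_ne (Φ x) 0 with hΦx | hΦx
  · rw [hΦx, norm_zero]
    positivity
  obtain ⟨v, hv⟩ := DFunLike.ne_iff.1 hΦx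
  have : Nontrivial (EuclideanSpace ℂ (Fin k)) := nontrivial_of_ne v 0 (by rintro rfl; simp at hv)
  have : Nontrivial (EuclideanSpace ℂ (Fin m)) := nontrivial_of_ne _ 0 hv
  have hg (t : ℝ) : (-M₁ t).rayleighSup + (M₂ t).rayleighSup ≤ -η + |α t| := by
    linarith [rayleighSup_neg_add_rayleighSup_le (ha t) (hb t), hgap t, neg_abs_le (α t)]
  have hint := intervalIntegral_le_integral_abs_sub_mul
    (hM₁.fun_neg.rayleighSup.fun_add hM₂.rayleighSup) hα hg hyx.le
  calc ‖Φ x‖ ≤ ‖Φ y‖ * Real.exp (∫ t in y..x, ((-M₁ t).rayleighSup + (M₂ t).rayleighSup)) :=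
        norm_le_mul_exp_integral_rayleighSup hM₁ hM₂ hΦ hyx.le
    _ ≤ ‖Φ y‖ * Real.exp (C₁ + -η * (x - y)) := by gcongr; linarith
    _ = 1 * Real.exp C₁ * Real.exp (-η * (x - y)) * ‖Φ y‖ := by rw [Real.exp_add]; ring

/-- Weakened spectral gap with `L¹` perturbation: if
`min σ(Re M₁)(x) - max σ(Re M₂)(x) ≥ η + α(x)` with `∫|α| ≤ C₁`, then solutions
of `Φ' = M₂(x)Φ - ΦM₁(x)` satisfy `‖Φ(x)‖ ≤ C e^{C₁} e^{-η(x-y)} ‖Φ(y)‖` for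
`x > y`. -/
theorem stmt9 (k m : ℕ) (η C₁ : ℝ) (hη : 0 < η) (hC₁ : 0 ≤ C₁)
    (M₁ : ℝ → (EuclideanSpace ℂ (Fin k) →L[ℂ] EuclideanSpace ℂ (Fin k)))
    (M₂ : ℝ → (EuclideanSpace ℂ (Fin m) →L[ℂ] EuclideanSpace ℂ (Fin m)))
    (hM₁ : Continuous M₁) (hM₂ : Continuous M₂)
    (a b α : ℝ → ℝ)
    (hα : MeasureTheory.Integrable α)
    (hαL1 : (∫ x, |α x|) ≤ C₁)
    (ha : ∀ x v, a x * ‖v‖ ^ 2 ≤ (inner ℂ (M₁ x v) v : ℂ).re)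
    (hb : ∀ x w, (inner ℂ (M₂ x w) w : ℂ).re ≤ b x * ‖w‖ ^ 2)
    (hgap : ∀ x, η + α x ≤ a x - b x) :
    ∃ C : ℝ, 0 < C ∧
      ∀ Φ : ℝ → (EuclideanSpace ℂ (Fin k) →L[ℂ] EuclideanSpace ℂ (Fin m)),
        (∀ x, HasDerivAt Φ (M₂ x ∘L Φ x - Φ x ∘L M₁ x) x) →
        ∀ y x : ℝ, y < x →
          ‖Φ x‖ ≤ C * Real.exp C₁ * Real.exp (-η * (x - y)) * ‖Φ y‖ :=
  stmt9_general k m η C₁ M₁ M₂ hM₁ hM₂ a b α hα hαL1 ha hb hgap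
end
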